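/- If ξ′ < ξ″ and h² ≤ ξ′(ξ″−ξ′)/ξ″, then (0,0) is the unique maximizer of F over ℝ×(−1,1), and the maximum value is F(0,0) = 0. -/
import Mathlib


/-- Φ(x) = −(|x|·√(x²−2))/2 + ln((|x|+√(x²−2))/√2) when |x| ≥ √2, and 0 when |x| < √2. -/
noncomputable def Phi (x : ℝ) : ℝ :=
  if Real.sqrt 2 ≤ |x| then
    -(|x| * Real.sqrt (x ^ 2 - 2)) / 2 +
      Real.log ((|x| + Real.sqrt (x ^ 2 - 2)) / Real.sqrt 2)
  else 0

/-- F(x,γ) = (1/2)·ln(1−γ²) + h²γ²/(2ξ′) − x²/(2(ξ′+ξ″)) + (x+hγ)²/(4ξ″)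
+ Φ((x+hγ)/√(2ξ″)). -/
noncomputable def F (ξ' ξ'' h x γ : ℝ) : ℝ :=
  (1 / 2) * Real.log (1 - γ ^ 2) + h ^ 2 * γ ^ 2 / (2 * ξ') -
    x ^ 2 / (2 * (ξ' + ξ'')) + (x + h * γ) ^ 2 / (4 * ξ'') +
    Phi ((x + h * γ) / Real.sqrt (2 * ξ''))

lemma Phi_aux (t s : ℝ) (ht : Real.sqrt 2 ≤ t) (hs : 0 ≤ s) (hs2 : s ^ 2 = t ^ 2 - 2) :
    -(t * s) / 2 + Real.log ((t + s) / Real.sqrt 2) ≤ 0 := by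
  have h2 : (0:ℝ) ≤ 2 := by norm_num
  have ht0 : 0 < t := lt_of_lt_of_le (Real.sqrt_pos.mpr (by norm_num)) ht
  have ht2 : 2 ≤ t ^ 2 := by
    nlinarith [Real.sq_sqrt h2, Real.sqrt_nonneg 2]
  have hts : 0 ≤ t * s := mul_nonneg ht0.le hs
  have hpos : 0 < t ^ 2 - 1 + t * s := by nlinarith
  have hsq : ((t + s) / Real.sqrt 2) ^ 2 = t ^ 2 - 1 + t * s := by
    rw [div_pow, Real.sq_sqrt h2]
    nlinarith [hs2]
  have hlog : Real.log ((t + s) / Real.sqrt 2) = (1/2) * Real.log (t ^ 2 - 1 + t * s) := by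
    rw [← hsq, Real.log_pow]
    push_cast; ring
  rw [hlog]
  have hexp : t ^ 2 - 1 + t * s ≤ Real.exp (t * s) := by
    have := Real.quadratic_le_exp_of_nonneg hts
    nlinarith [sq_nonneg s, sq_nonneg (t*s)]
  have := (Real.log_le_iff_le_exp hpos).mpr hexp
  linarith

lemma Phi_nonpos (x : ℝ) : Phi x ≤ 0 := by
  unfold Phi
  split
  · next h =>
    have habs : |x| ^ 2 = x ^ 2 := sq_abs x
    have hstep : Real.sqrt (x ^ 2 - 2) ^ 2 = |x| ^ 2 - 2 := by
      rw [Real.sq_sqrt, habs]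
      nlinarith [Real.sq_sqrt (by norm_num : (0:ℝ) ≤ 2), Real.sqrt_nonneg 2, abs_nonneg x,
        sq_abs x]
    have := Phi_aux |x| (Real.sqrt (x ^ 2 - 2)) h (Real.sqrt_nonneg _) hstep
    linarith
  · exact le_refl _

/-- If ξ′ < ξ″ and h² ≤ ξ′(ξ″−ξ′)/ξ″, then (0,0) is the unique maximizer of F over
ℝ×(−1,1), and the maximum value is F(0,0) = 0. -/
theorem stmt_14 (ξ' ξ'' h : ℝ) (hξ' : 0 < ξ') (hξ'' : 0 < ξ'') (hh : 0 ≤ h)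
    (hlt : ξ' < ξ'') (hle : h ^ 2 ≤ ξ' * (ξ'' - ξ') / ξ'') :
    F ξ' ξ'' h 0 0 = 0 ∧
    ∀ x γ : ℝ, -1 < γ → γ < 1 → ¬(x = 0 ∧ γ = 0) → F ξ' ξ'' h x γ < 0 := by
  have hle' : h ^ 2 * ξ'' ≤ ξ' * (ξ'' - ξ') := (le_div_iff₀ hξ'').mp hle
  constructor
  · simp [F, Phi]
  · intro x γ hγ1 hγ2 hne
    have hφ := Phi_nonpos ((x + h * γ) / Real.sqrt (2 * ξ''))
    have h1γ : 0 < 1 - γ ^ 2 := by nlinarith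
    unfold F
    rcases eq_or_ne γ 0 with rfl | hγ0
    · have hx0 : x ≠ 0 := by
        intro hx; exact hne ⟨hx, rfl⟩
      have hx2 : 0 < x ^ 2 := by positivity
      norm_num at hφ ⊢
      have : x ^ 2 / (4 * ξ'') < x ^ 2 / (2 * (ξ' + ξ'')) := by
        apply div_lt_div_of_pos_left hx2 (by linarith) (by linarith)
      nlinarith
    · have hlog : Real.log (1 - γ ^ 2) < -γ ^ 2 := by
        have := Real.log_lt_sub_one_of_pos h1γ (by
          intro hc
          apply hγ0
          have : γ ^ 2 = 0 := by linarith
          exact pow_eq_zero_iff (by norm_num) |>.mp this)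
        linarith
      have key : h ^ 2 * γ ^ 2 / (2 * ξ') - x ^ 2 / (2 * (ξ' + ξ'')) +
          (x + h * γ) ^ 2 / (4 * ξ'') ≤ γ ^ 2 / 2 := by
        rw [← sub_nonneg]
        have hD : (0:ℝ) < 4 * ξ' * ξ'' * (ξ' + ξ'') := by positivity
        have expand : γ ^ 2 / 2 - (h ^ 2 * γ ^ 2 / (2 * ξ') - x ^ 2 / (2 * (ξ' + ξ'')) +
            (x + h * γ) ^ 2 / (4 * ξ'')) =
            (2 * γ ^ 2 * ξ' * ξ'' * (ξ' + ξ'') - 2 * h ^ 2 * γ ^ 2 * ξ'' * (ξ' + ξ'')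
              + 2 * x ^ 2 * ξ' * ξ'' - ξ' * (ξ' + ξ'') * (x + h * γ) ^ 2) /
              (4 * ξ' * ξ'' * (ξ' + ξ'')) := by
          field_simp
          ring
        rw [expand]
        apply div_nonneg _ hD.le
        nlinarith [sq_nonneg ((ξ'' - ξ') * x - h * γ * (ξ' + ξ'')),
          mul_nonneg (sq_nonneg γ) (sub_nonneg.mpr hle'),
          mul_nonneg (mul_nonneg (sq_nonneg γ) (sub_nonneg.mpr hle')) hξ''.le,
          mul_nonneg (mul_nonneg (sq_nonneg γ) (sub_nonneg.mpr hle')) hξ'.le,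
          sq_nonneg (h * γ), sq_nonneg x, mul_pos hξ' hξ'']
      linarith
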